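/- Suppose m₂ : ℕ → ℝ is completely multiplicative with values in {-1,0,1}, m₂(p) = 0 at a prime p, and ∑_{n=1}^∞ m₂(n)·n·f(2πn²/x) > 0 for all x > 0. Let m₁ be completely multiplicative agreeing with m₂ at all primes except p, with m₁(p) = 1. Then ∑_{n=1}^∞ m₁(n)·n·f(2πn²/x) > ∑_{n=1}^∞ m₂(n)·n·f(2πn²/x) for all x > 0. -/

import Mathlib

noncomputable def f (y : ℝ) : ℝ := (1 / y) * ∫ t in Set.Ioi y, Real.exp (-t) / t

/-!
Write `S₁, S₂` for the two series. Since `m₁ = m₂` off the multiples of `p`, `m₂(pk) = 0` and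
`m₁(pk) = m₁(k)`, the difference `S₁(x) - S₂(x)` is the sum over `n = pk`, i.e.
`S₁(x) = S₂(x) + p S₁(x/p²)`. Iterating, `S₁(x) - S₂(x) = ∑_{1 ≤ k < K} pᵏ S₂(x/p²ᵏ) + pᴷ S₁(x/p²ᴷ)`,
where every `S₂`-term is positive and the remainder tends to `0` because `f(y) ≤ 1/y²` gives
`|S₁(z)| = O(z²)`.
-/

open Real MeasureTheory Set Filter Topology

lemma f_nonneg {y : ℝ} (hy : 0 ≤ y) : 0 ≤ f y :=
  mul_nonneg (by positivity) <| setIntegral_nonneg measurableSet_Ioi fun t ht =>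
    div_nonneg (exp_pos _).le (hy.trans_lt ht).le

lemma f_le_one_div_sq {y : ℝ} (hy : 0 < y) : f y ≤ 1 / y ^ 2 := by
  have hint : ∫ t in Ioi y, exp (-t) / t ≤ 1 / y :=
    calc ∫ t in Ioi y, exp (-t) / t ≤ ∫ t in Ioi y, exp (-t) / y := by
          refine integral_mono_of_nonneg ?_ ((integrableOn_exp_neg_Ioi y).div_const y) ?_
          all_goals filter_upwards [ae_restrict_mem measurableSet_Ioi] with t (ht : y < t)
          · exact div_nonneg (exp_pos _).le (hy.trans ht).le
          · exact div_le_div_of_nonneg_left (exp_pos _).le hy ht.le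
      _ = exp (-y) / y := by rw [integral_div, integral_exp_neg_Ioi]
      _ ≤ 1 / y := by gcongr; exact exp_le_one_iff.mpr (by linarith)
  calc f y ≤ 1 / y * (1 / y) := mul_le_mul_of_nonneg_left hint (by positivity)
    _ = 1 / y ^ 2 := by ring

lemma natCast_mul_f_le {x : ℝ} (hx : 0 < x) (n : ℕ) :
    (n : ℝ) * f (2 * π * (n : ℝ) ^ 2 / x) ≤ 1 / (n : ℝ) ^ 3 * x ^ 2 := by
  rcases Nat.eq_zero_or_pos n with rfl | hn
  · simp
  have hn : (0 : ℝ) < n := by exact_mod_cast hn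
  have hπ : 1 ≤ 4 * π ^ 2 := by nlinarith [pi_gt_three]
  calc (n : ℝ) * f (2 * π * (n : ℝ) ^ 2 / x)
      ≤ n * (1 / (2 * π * (n : ℝ) ^ 2 / x) ^ 2) := by gcongr; exact f_le_one_div_sq (by positivity)
    _ = 1 / (4 * π ^ 2) * (1 / (n : ℝ) ^ 3 * x ^ 2) := by field_simp; ring
    _ ≤ 1 / (n : ℝ) ^ 3 * x ^ 2 := by
        apply mul_le_of_le_one_left (by positivity)
        rw [div_le_one (by positivity)]; exact hπ

noncomputable def fSum (m : ℕ → ℝ) (x : ℝ) : ℝ :=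
  ∑' n : ℕ, m n * n * f (2 * π * (n : ℝ) ^ 2 / x)

section fSum

variable {m : ℕ → ℝ} {x : ℝ}

lemma norm_fSum_term_le (hm : ∀ n, |m n| ≤ 1) (hx : 0 < x) (n : ℕ) :
    ‖m n * n * f (2 * π * (n : ℝ) ^ 2 / x)‖ ≤ 1 / (n : ℝ) ^ 3 * x ^ 2 := by
  have h0 : 0 ≤ (n : ℝ) * f (2 * π * (n : ℝ) ^ 2 / x) :=
    mul_nonneg n.cast_nonneg (f_nonneg (by positivity))
  rw [mul_assoc, norm_mul, Real.norm_of_nonneg h0]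
  exact (mul_le_of_le_one_left h0 (hm n)).trans (natCast_mul_f_le hx n)

lemma summable_fSum_term (hm : ∀ n, |m n| ≤ 1) (hx : 0 < x) :
    Summable fun n : ℕ => m n * n * f (2 * π * (n : ℝ) ^ 2 / x) :=
  .of_norm_bounded ((summable_one_div_nat_pow.mpr (by norm_num)).mul_right _)
    (norm_fSum_term_le hm hx)

lemma abs_fSum_le (hm : ∀ n, |m n| ≤ 1) (hx : 0 < x) :
    |fSum m x| ≤ (∑' n : ℕ, 1 / (n : ℝ) ^ 3) * x ^ 2 :=
  tsum_of_norm_bounded ((summable_one_div_nat_pow.mpr (by norm_num)).hasSum.mul_right _)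
    (norm_fSum_term_le hm hx)

end fSum

lemma eq_of_not_dvd_of_eq_on_primes {M : Type*} [MulOneClass M] {m₁ m₂ : ℕ → M} {p : ℕ}
    (h₁one : m₁ 1 = 1) (h₁mul : ∀ a b, m₁ (a * b) = m₁ a * m₁ b)
    (h₂one : m₂ 1 = 1) (h₂mul : ∀ a b, m₂ (a * b) = m₂ a * m₂ b)
    (hagree : ∀ q : ℕ, q.Prime → q ≠ p → m₁ q = m₂ q) {n : ℕ} (hn : ¬ p ∣ n) :
    m₁ n = m₂ n := by
  induction n using Nat.recOnMul with
  | zero => exact absurd (dvd_zero p) hn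
  | one => rw [h₁one, h₂one]
  | prime q hq => exact hagree q hq (by rintro rfl; exact hn dvd_rfl)
  | mul a b ha hb =>
    rw [h₁mul, h₂mul, ha fun h => hn (h.mul_right b), hb fun h => hn (h.mul_left a)]

lemma tsum_sub_tsum_eq_tsum_comp_mul {E : Type*} [AddCommGroup E] [TopologicalSpace E]
    [IsTopologicalAddGroup E] [T2Space E] {g h : ℕ → E} (hg : Summable g) (hh : Summable h)
    {p : ℕ} (hp : p ≠ 0) (hgh : ∀ n, ¬ p ∣ n → g n = h n) :
    ∑' n, g n - ∑' n, h n = ∑' k, (g (p * k) - h (p * k)) := by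
  rw [← hg.tsum_sub hh]
  refine ((mul_right_injective₀ hp).tsum_eq fun n hn => ?_).symm
  by_contra hnp
  exact hn (sub_eq_zero.mpr (hgh n fun ⟨k, hk⟩ => hnp ⟨k, hk.symm⟩))

lemma fSum_eq_add_mul_fSum_div_sq {m₁ m₂ : ℕ → ℝ} {p : ℕ} (hp : p ≠ 0)
    (hm₁ : ∀ n, |m₁ n| ≤ 1) (hm₂ : ∀ n, |m₂ n| ≤ 1) (hagree : ∀ n, ¬ p ∣ n → m₁ n = m₂ n)
    (h₁p : ∀ k, m₁ (p * k) = m₁ k) (h₂p : ∀ k, m₂ (p * k) = 0) {x : ℝ} (hx : 0 < x) :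
    fSum m₁ x = fSum m₂ x + p * fSum m₁ (x / p ^ 2) := by
  have hdiff := tsum_sub_tsum_eq_tsum_comp_mul (summable_fSum_term hm₁ hx)
    (summable_fSum_term hm₂ hx) hp fun n hn => by simp only [hagree n hn]
  have hterm : ∀ k : ℕ, m₁ (p * k) * ((p * k : ℕ) : ℝ) * f (2 * π * ((p * k : ℕ) : ℝ) ^ 2 / x)
      - m₂ (p * k) * ((p * k : ℕ) : ℝ) * f (2 * π * ((p * k : ℕ) : ℝ) ^ 2 / x)
      = p * (m₁ k * k * f (2 * π * (k : ℝ) ^ 2 / (x / p ^ 2))) := fun k => by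
    have harg : 2 * π * ((p * k : ℕ) : ℝ) ^ 2 / x = 2 * π * (k : ℝ) ^ 2 / (x / p ^ 2) := by
      rw [div_div_eq_mul_div]; push_cast; ring
    rw [h₁p, h₂p, harg]
    push_cast
    ring
  rw [tsum_congr hterm, tsum_mul_left] at hdiff
  unfold fSum
  linarith

lemma lt_of_eq_add_mul_comp_div_sq {F G : ℝ → ℝ} {c C : ℝ} (hc : 1 < c)
    (hF : ∀ x, 0 < x → |F x| ≤ C * x ^ 2) (hG : ∀ x, 0 < x → 0 < G x)
    (hrec : ∀ x, 0 < x → F x = G x + c * F (x / c ^ 2)) {x : ℝ} (hx : 0 < x) : G x < F x := by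
  have hc0 : 0 < c := one_pos.trans hc
  set y : ℕ → ℝ := fun k => x / (c ^ 2) ^ k with hy
  have hy0 : ∀ k, 0 < y k := fun k => by positivity
  set a : ℕ → ℝ := fun k => c ^ k * F (y k) with ha
  have step : ∀ k, a k = c ^ k * G (y k) + a (k + 1) := fun k => by
    have hyk : y (k + 1) = y k / c ^ 2 := by simp only [hy, pow_succ, div_div]
    simp only [ha, hyk, hrec (y k) (hy0 k), pow_succ]
    ring
  have hanti : Antitone a := antitone_nat_of_succ_le fun k => by
    linarith [step k, mul_pos (pow_pos hc0 k) (hG _ (hy0 k))]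
  have hlim : Tendsto a atTop (𝓝 0) := by
    have hr : (c ^ 3)⁻¹ < 1 := inv_lt_one_of_one_lt₀ (one_lt_pow₀ hc (by norm_num))
    have hgeom := (tendsto_pow_atTop_nhds_zero_of_lt_one (by positivity) hr).const_mul (C * x ^ 2)
    rw [mul_zero] at hgeom
    refine squeeze_zero_norm (fun k => ?_) hgeom
    calc ‖a k‖ = c ^ k * |F (y k)| := by
          rw [Real.norm_eq_abs, abs_mul, abs_of_pos (pow_pos hc0 k)]
      _ ≤ c ^ k * (C * y k ^ 2) := by gcongr; exact hF _ (hy0 k)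
      _ = C * x ^ 2 * (c ^ 3)⁻¹ ^ k := by
          simp only [hy]
          rw [inv_pow, div_pow, ← pow_mul, ← pow_mul, ← pow_mul]
          field_simp
          ring
  have ha2 := hanti.le_of_tendsto hlim 2
  have h0 := step 0
  have h1 := step 1
  norm_num [ha, hy] at h0 h1 ha2
  linarith [mul_pos hc0 (hG (x / c ^ 2) (by positivity))]

open Real in
theorem raise_prime_from_zero (m₁ m₂ : ℕ → ℝ) (p : ℕ) (hp : p.Prime)
    (h₁one : m₁ 1 = 1) (h₁mul : ∀ a b : ℕ, m₁ (a * b) = m₁ a * m₁ b)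
    (h₂one : m₂ 1 = 1) (h₂mul : ∀ a b : ℕ, m₂ (a * b) = m₂ a * m₂ b)
    (h₁val : ∀ n, m₁ n = -1 ∨ m₁ n = 0 ∨ m₁ n = 1)
    (h₂val : ∀ n, m₂ n = -1 ∨ m₂ n = 0 ∨ m₂ n = 1)
    (hagree : ∀ q : ℕ, q.Prime → q ≠ p → m₁ q = m₂ q)
    (h₂p : m₂ p = 0) (h₁p : m₁ p = 1)
    (hpos : ∀ x : ℝ, 0 < x → 0 < ∑' n : ℕ, m₂ n * (n : ℝ) * f (2 * π * (n : ℝ) ^ 2 / x)) :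
    ∀ x : ℝ, 0 < x →
      (∑' n : ℕ, m₂ n * (n : ℝ) * f (2 * π * (n : ℝ) ^ 2 / x)) <
        ∑' n : ℕ, m₁ n * (n : ℝ) * f (2 * π * (n : ℝ) ^ 2 / x) := by
  have hm₁ : ∀ n, |m₁ n| ≤ 1 := fun n => by rcases h₁val n with h | h | h <;> simp [h]
  have hm₂ : ∀ n, |m₂ n| ≤ 1 := fun n => by rcases h₂val n with h | h | h <;> simp [h]
  have hrec : ∀ x, 0 < x → fSum m₁ x = fSum m₂ x + p * fSum m₁ (x / p ^ 2) :=
    fun x hx => fSum_eq_add_mul_fSum_div_sq hp.ne_zero hm₁ hm₂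
      (fun n hn => eq_of_not_dvd_of_eq_on_primes h₁one h₁mul h₂one h₂mul hagree hn)
      (fun k => by rw [h₁mul, h₁p, one_mul]) (fun k => by rw [h₂mul, h₂p, zero_mul]) hx
  exact fun x hx => lt_of_eq_add_mul_comp_div_sq (by exact_mod_cast hp.one_lt)
    (fun y hy => abs_fSum_le hm₁ hy) hpos hrec hx
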